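/- Consider the ω-periodic model x_i(m+1) = x_i(m) e^{-a_i(m)h} + θ_i(m)[Σ_{j=1}^N b_{ij}(m) f_j(x_j(m-τ(m))) + I_i(m)], where ω ∈ ℕ and a_i, b_{ij}, I_i, τ : ℕ₀ → ℝ are ω-periodic, a_i(m) > 0, θ_i(m) = (1−e^{-a_i(m)h})/a_i(m), f_j Lipschitz with constant F_j > 0, 0 ≤ τ(m) ≤ τ. If the matrix M = diag(a_1^-,…,a_N^-) − [b_{ij}^+ F_j] is an M-matrix, then the model has a unique ω-periodic solution, and this solution is globally exponentially stable (every solution converges to it at an exponential rate). -/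

import Mathlib

/-!
The M-matrix hypothesis gives a vector `ξ > 0` with `∑ⱼ b⁺ᵢⱼ Fⱼ ξⱼ < a⁻ᵢ ξᵢ`: write the matrix as
`s - B` with `B ≥ 0`; Perron–Frobenius for the positive matrices `B + εJ` either produces such a `ξ`
or, as `ε → 0`, a nonnegative eigenvector of `B` with eigenvalue `≥ s`, i.e. an eigenvalue of the
M-matrix with nonpositive real part.

In the norm weighted by `ξ`, the difference of two solutions then shrinks by a fixed factor
`exp (-μ (τ + 1)) < 1` from the maximum over a delay window to the next value, and a discrete
Halanay inequality turns this into exponential decay, uniformly in the starting time.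

By periodicity of the coefficients the translates `x (· + k ω)` of a solution are again solutions,
so by the decay estimate they form a Cauchy sequence; its limit is an `ω`-periodic solution. The
distance of two periodic solutions is periodic and decays, hence vanishes.
-/

/-- The norm of the segment of `u` at time `m`, with maximum delay `τ`. -/
noncomputable def segNorm {N : ℕ} (τ : ℕ) (u : ℤ → Fin N → ℝ) (m : ℤ) : ℝ :=
  (Finset.Icc (m - τ) m).sup' (Finset.nonempty_Icc.mpr (by omega)) fun k => ‖u k‖

/-- A square real matrix is an M-matrix if its off-diagonal entries are nonpositive
and all of its (complex) eigenvalues have positive real part. -/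
def IsMMatrix {N : ℕ} (M : Matrix (Fin N) (Fin N) ℝ) : Prop :=
  (∀ i j, i ≠ j → M i j ≤ 0) ∧
  ∀ z ∈ spectrum ℂ (M.map (Complex.ofReal)), 0 < z.re

open Filter Topology Matrix Function Real

namespace Matrix

variable {ι : Type*} [Fintype ι]

theorem mem_spectrum_of_mulVec_eq_smul {K : Type*} [Field K] [DecidableEq ι] {A : Matrix ι ι K}
    {v : ι → K} {z : K} (hv : v ≠ 0) (h : A *ᵥ v = z • v) : z ∈ spectrum K A := by
  rw [← spectrum_toLin', ← Module.End.hasEigenvalue_iff_mem_spectrum]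
  exact Module.End.hasEigenvalue_of_hasEigenvector ⟨Module.End.mem_eigenspace_iff.mpr h, hv⟩

theorem mulVec_pos_of_pos {P : Matrix ι ι ℝ} (hP : ∀ i j, 0 < P i j) {v : ι → ℝ} (hv : 0 ≤ v)
    (hv₀ : v ≠ 0) (i : ι) : 0 < (P *ᵥ v) i := by
  obtain ⟨j, hj⟩ := Function.ne_iff.mp hv₀
  exact Finset.sum_pos' (fun k _ => mul_nonneg (hP i k).le (hv k))
    ⟨j, Finset.mem_univ j, mul_pos (hP i j) (lt_of_le_of_ne (hv j) (Ne.symm hj))⟩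

theorem le_sum_of_smul_le_mulVec {P : Matrix ι ι ℝ} (hP : ∀ i j, 0 ≤ P i j) {t : ℝ} {v : ι → ℝ}
    (hv : v ∈ stdSimplex ℝ ι) (ht : t • v ≤ P *ᵥ v) : t ≤ ∑ i, ∑ j, P i j := by
  calc t = ∑ i, t * v i := by rw [← Finset.mul_sum, hv.2, mul_one]
    _ ≤ ∑ i, ∑ j, P i j * v j := Finset.sum_le_sum fun i _ => ht i
    _ ≤ ∑ i, ∑ j, P i j := by
      gcongr with i _ j _
      exact mul_le_of_le_one_right (hP i j) (mem_Icc_of_mem_stdSimplex hv j).2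

theorem inv_sum_smul_mem_stdSimplex {w : ι → ℝ} (hw : ∀ i, 0 < w i) [Nonempty ι] :
    (∑ i, w i)⁻¹ • w ∈ stdSimplex ℝ ι := by
  have hsum : 0 < ∑ i, w i := Finset.sum_pos (fun i _ => hw i) Finset.univ_nonempty
  refine ⟨fun i => by simpa using mul_nonneg (inv_nonneg.mpr hsum.le) (hw i).le, ?_⟩
  simp [← Finset.mul_sum, inv_mul_cancel₀ hsum.ne']

theorem exists_gt_smul_le_mulVec [Nonempty ι] {P : Matrix ι ι ℝ} (hP : ∀ i j, 0 < P i j)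
    {T : ℝ} {v : ι → ℝ} (hv : v ∈ stdSimplex ℝ ι) (hT : T • v ≤ P *ᵥ v)
    (hne : T • v ≠ P *ᵥ v) : ∃ t > T, ∃ w ∈ stdSimplex ℝ ι, t • w ≤ P *ᵥ w := by
  have hv₀ : v ≠ 0 := by rintro rfl; simpa using hv.2
  set w := P *ᵥ v
  have hw : ∀ i, 0 < w i := mulVec_pos_of_pos hP hv.1 hv₀
  -- `P` applied to the nonzero gap `P v - T v ≥ 0` makes the gap strict in every coordinate
  have hgap : ∀ i, T * w i < (P *ᵥ w) i := by
    intro i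
    have := mulVec_pos_of_pos hP (sub_nonneg.mpr hT) (sub_ne_zero.mpr hne.symm) i
    simpa [mulVec_sub, mulVec_smul] using this
  obtain ⟨t, hTt, ht⟩ := (eventually_all.2 fun i =>
    (continuous_id.mul continuous_const).continuousAt.eventually (gt_mem_nhds (hgap i))).exists_gt
  refine ⟨t, hTt, (∑ i, w i)⁻¹ • w, inv_sum_smul_mem_stdSimplex hw, ?_⟩
  rw [mulVec_smul, smul_comm]
  exact smul_le_smul_of_nonneg_left (fun i => (ht i).le)
    (inv_nonneg.mpr (Finset.sum_nonneg fun i _ => (hw i).le))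

theorem exists_pos_eigenvector_of_pos [Nonempty ι] {P : Matrix ι ι ℝ} (hP : ∀ i j, 0 < P i j) :
    ∃ c : ℝ, ∃ v ∈ stdSimplex ℝ ι, (∀ i, 0 < v i) ∧ P *ᵥ v = c • v := by
  classical
  have hP₀ : ∀ i j, 0 ≤ P i j := fun i j => (hP i j).le
  set R := ∑ i, ∑ j, P i j
  set K : Set (ℝ × (ι → ℝ)) := (Set.Icc 0 R ×ˢ stdSimplex ℝ ι) ∩ {p | p.1 • p.2 ≤ P *ᵥ p.2}
  have hK : IsCompact K := (isCompact_Icc.prod (isCompact_stdSimplex ℝ ι)).inter_right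
    (isClosed_le (by fun_prop) (by fun_prop))
  obtain ⟨i₀⟩ := ‹Nonempty ι›
  have hK₀ : ((0 : ℝ), Pi.single i₀ 1) ∈ K := by
    have h₁ := single_mem_stdSimplex ℝ i₀
    refine ⟨⟨⟨le_rfl, Finset.sum_nonneg fun i _ => Finset.sum_nonneg fun j _ => hP₀ i j⟩, h₁⟩,
      fun i => ?_⟩
    rw [zero_smul]
    exact (mulVec_pos_of_pos hP h₁.1 (by simp) i).le
  -- the Collatz–Wielandt value `T` is attained at `v`; maximality forces `P v = T v`
  obtain ⟨⟨T, v⟩, ⟨⟨⟨hT₀, -⟩, hv⟩, hTv⟩, hmax⟩ :=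
    hK.exists_isMaxOn ⟨_, hK₀⟩ continuous_fst.continuousOn
  have heq : P *ᵥ v = T • v := by
    by_contra hne
    obtain ⟨t, hTt, w, hw, htw⟩ := exists_gt_smul_le_mulVec hP hv hTv (Ne.symm hne)
    have : t ≤ T := isMaxOn_iff.mp hmax (t, w)
      ⟨⟨⟨hT₀.trans hTt.le, le_sum_of_smul_le_mulVec hP₀ hw htw⟩, hw⟩, htw⟩
    linarith
  refine ⟨T, v, hv, fun i => ?_, heq⟩
  have hv₀ : v ≠ 0 := by rintro rfl; simpa using hv.2
  have := mulVec_pos_of_pos hP hv.1 hv₀ i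
  rw [heq] at this
  exact pos_of_mul_pos_right this hT₀

theorem add_of_const_mulVec {B : Matrix ι ι ℝ} {u : ι → ℝ} (hu : u ∈ stdSimplex ℝ ι) (ε : ℝ) :
    (B + of fun _ _ => ε) *ᵥ u = B *ᵥ u + fun _ => ε := by
  rw [add_mulVec]
  congr 1
  ext i
  simp [mulVec, dotProduct, ← Finset.mul_sum, hu.2]

theorem exists_mulVec_lt_or_eigenvector [Nonempty ι] {B : Matrix ι ι ℝ} (hB : ∀ i j, 0 ≤ B i j)
    (s : ℝ) :
    (∃ ξ : ι → ℝ, (∀ i, 0 < ξ i) ∧ ∀ i, (B *ᵥ ξ) i < s * ξ i) ∨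
      ∃ c ≥ s, ∃ u ∈ stdSimplex ℝ ι, B *ᵥ u = c • u := by
  have hpert : ∀ ε > 0, ∃ c, ∃ u ∈ stdSimplex ℝ ι, (∀ i, 0 < u i) ∧
      (B + of fun _ _ => ε) *ᵥ u = c • u := fun ε hε =>
    exists_pos_eigenvector_of_pos fun i j => by simpa using add_pos_of_nonneg_of_pos (hB i j) hε
  by_cases hsmall : ∃ ε > 0, ∃ c ≤ s, ∃ u ∈ stdSimplex ℝ ι, (∀ i, 0 < u i) ∧
      (B + of fun _ _ => ε) *ᵥ u = c • u
  · obtain ⟨ε, hε, c, hc, u, hu, hpos, heq⟩ := hsmall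
    refine Or.inl ⟨u, hpos, fun i => ?_⟩
    have := congrFun heq i
    simp only [add_of_const_mulVec hu, Pi.add_apply, Pi.smul_apply, smul_eq_mul] at this
    nlinarith [hpos i]
  -- otherwise the eigenvalues of `B + ε J` stay `≥ s`; pass to the limit `ε → 0` by compactness
  push Not at hsmall
  set R := ∑ i, ∑ j, (B i j + 1)
  set Z : Set (ℝ × ℝ × (ι → ℝ)) := (Set.Icc 0 1 ×ˢ Set.Icc s R ×ˢ stdSimplex ℝ ι) ∩
    {p | (B + of fun _ _ => p.1) *ᵥ p.2.2 = p.2.1 • p.2.2}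
  have hZ : IsCompact Z :=
    (isCompact_Icc.prod (isCompact_Icc.prod (isCompact_stdSimplex ℝ ι))).inter_right
      (isClosed_eq (by fun_prop) (by fun_prop))
  have hmem : ∀ k : ℕ, 1 / ((k : ℝ) + 1) ∈ Prod.fst '' Z := by
    intro k
    have hε : 0 < 1 / ((k : ℝ) + 1) := by positivity
    have hε₁ : 1 / ((k : ℝ) + 1) ≤ 1 := div_le_one_of_le₀ (by simp) (by positivity)
    obtain ⟨c, u, hu, hpos, heq⟩ := hpert _ hε
    have hcR : c ≤ R := by
      have hle : c • u ≤ (B + of fun _ _ => 1) *ᵥ u := by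
        rw [← heq, add_of_const_mulVec hu, add_of_const_mulVec hu]
        exact add_le_add_right (fun _ => hε₁) _
      simpa [R] using le_sum_of_smul_le_mulVec
        (fun i j => by simpa using add_nonneg (hB i j) zero_le_one) hu hle
    have hsc : s ≤ c := not_lt.mp fun h => hsmall _ hε c h.le u hu hpos heq
    exact ⟨(_, c, u), ⟨⟨⟨hε.le, hε₁⟩, ⟨hsc, hcR⟩, hu⟩, heq⟩, rfl⟩
  obtain ⟨⟨ε, c, u⟩, ⟨⟨-, ⟨hc, -⟩, hu : u ∈ stdSimplex ℝ ι⟩,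
      heq : (B + of fun _ _ => ε) *ᵥ u = c • u⟩, rfl : ε = 0⟩ :=
    (hZ.image continuous_fst).isClosed.mem_of_tendsto tendsto_one_div_add_atTop_nhds_zero_nat
      (Eventually.of_forall hmem)
  rw [add_of_const_mulVec hu, ← Pi.zero_def, add_zero] at heq
  exact Or.inr ⟨c, hc, u, hu, heq⟩

end Matrix

theorem IsMMatrix.exists_pos_mulVec_pos {N : ℕ} {M : Matrix (Fin N) (Fin N) ℝ} (hM : IsMMatrix M) :
    ∃ ξ : Fin N → ℝ, (∀ i, 0 < ξ i) ∧ ∀ i, 0 < (M *ᵥ ξ) i := by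
  rcases isEmpty_or_nonempty (Fin N) with hN | hN
  · exact ⟨0, isEmptyElim, isEmptyElim⟩
  set s := ∑ i, |M i i|
  set B := s • (1 : Matrix (Fin N) (Fin N) ℝ) - M
  have hB : ∀ i j, 0 ≤ B i j := by
    intro i j
    rcases eq_or_ne i j with rfl | hij
    · have := Finset.single_le_sum (fun k _ => abs_nonneg (M k k)) (Finset.mem_univ i)
      simpa [B] using (le_abs_self _).trans this
    · simpa [B, one_apply_ne hij] using hM.1 i j hij
  have hMB : ∀ v, M *ᵥ v = s • v - B *ᵥ v := by simp [B, sub_mulVec, smul_mulVec]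
  rcases exists_mulVec_lt_or_eigenvector hB s with ⟨ξ, hξ, hlt⟩ | ⟨c, hc, u, hu, heig⟩
  · exact ⟨ξ, hξ, fun i => by simpa [hMB] using hlt i⟩
  -- otherwise `s - c ≤ 0` is an eigenvalue of `M`
  have hu₀ : Complex.ofReal ∘ u ≠ 0 := fun h => by
    simpa [show u = 0 from funext fun i => by simpa using congrFun h i] using hu.2
  have hev : M.map Complex.ofReal *ᵥ (Complex.ofReal ∘ u) =
      ((s - c : ℝ) : ℂ) • (Complex.ofReal ∘ u) := by
    ext i
    rw [show M.map Complex.ofReal = M.map Complex.ofRealHom from rfl,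
      show Complex.ofReal ∘ u = Complex.ofRealHom ∘ u from rfl, ← RingHom.map_mulVec, hMB, heig]
    simp [sub_mul]
  have := hM.2 _ (mem_spectrum_of_mulVec_eq_smul hu₀ hev)
  simp only [Complex.ofReal_re] at this
  linarith

section WeightedNorm

variable {ι : Type*} [Fintype ι] {ξ : ι → ℝ}

theorem abs_le_mul_of_norm_div_le (hξ : ∀ i, 0 < ξ i) {v : ι → ℝ} {c : ℝ} (h : ‖v / ξ‖ ≤ c)
    (i : ι) : |v i| ≤ c * ξ i := by
  have := (norm_le_pi_norm (v / ξ) i).trans h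
  rwa [Pi.div_apply, Real.norm_eq_abs, abs_div, abs_of_pos (hξ i), div_le_iff₀ (hξ i)] at this

theorem norm_div_le_of_abs_le (hξ : ∀ i, 0 < ξ i) {v : ι → ℝ} {c : ℝ} (hc : 0 ≤ c)
    (h : ∀ i, |v i| ≤ c * ξ i) : ‖v / ξ‖ ≤ c := by
  refine (pi_norm_le_iff_of_nonneg hc).2 fun i => ?_
  rw [Pi.div_apply, Real.norm_eq_abs, abs_div, abs_of_pos (hξ i), div_le_iff₀ (hξ i)]
  exact h i

theorem norm_le_sum_mul_norm_div (hξ : ∀ i, 0 < ξ i) (v : ι → ℝ) :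
    ‖v‖ ≤ (∑ i, ξ i) * ‖v / ξ‖ := by
  have hsum : 0 ≤ ∑ i, ξ i := Finset.sum_nonneg fun i _ => (hξ i).le
  refine (pi_norm_le_iff_of_nonneg (mul_nonneg hsum (norm_nonneg _))).2 fun i => ?_
  calc ‖v i‖ ≤ ‖v / ξ‖ * ξ i := abs_le_mul_of_norm_div_le hξ le_rfl i
    _ ≤ ‖v / ξ‖ * ∑ i, ξ i :=
      mul_le_mul_of_nonneg_left (Finset.single_le_sum (fun j _ => (hξ j).le) (Finset.mem_univ i))
        (norm_nonneg _)
    _ = (∑ i, ξ i) * ‖v / ξ‖ := mul_comm _ _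

theorem norm_div_le_sum_inv_mul_norm (hξ : ∀ i, 0 < ξ i) (v : ι → ℝ) :
    ‖v / ξ‖ ≤ (∑ i, (ξ i)⁻¹) * ‖v‖ := by
  have h := norm_le_sum_mul_norm_div (fun i => inv_pos.2 (hξ i)) (v / ξ)
  have hv : (v / ξ / fun i => (ξ i)⁻¹) = v := funext fun i => by simp [(hξ i).ne']
  rwa [hv] at h

end WeightedNorm

section SegNorm

variable {N : ℕ} (τ : ℕ) (u : ℤ → Fin N → ℝ)

theorem norm_le_segNorm {m k : ℤ} (h₁ : m - τ ≤ k) (h₂ : k ≤ m) : ‖u k‖ ≤ segNorm τ u m :=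
  Finset.le_sup' (fun k => ‖u k‖) (Finset.mem_Icc.mpr ⟨h₁, h₂⟩)

theorem segNorm_nonneg (m : ℤ) : 0 ≤ segNorm τ u m :=
  (norm_nonneg _).trans (norm_le_segNorm τ u (by omega) le_rfl)

variable {τ u} in
theorem segNorm_le {m : ℤ} {c : ℝ} (h : ∀ k, m - τ ≤ k → k ≤ m → ‖u k‖ ≤ c) :
    segNorm τ u m ≤ c :=
  Finset.sup'_le _ _ fun k hk => h k (Finset.mem_Icc.mp hk).1 (Finset.mem_Icc.mp hk).2

theorem segNorm_comp_add (c m : ℤ) : segNorm τ (fun k => u (k + c)) m = segNorm τ u (m + c) := by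
  refine le_antisymm (segNorm_le fun k h₁ h₂ => norm_le_segNorm τ u (by omega) (by omega))
    (segNorm_le fun k h₁ h₂ => ?_)
  simpa using norm_le_segNorm τ (fun k => u (k + c)) (m := m) (k := k - c) (by omega) (by omega)

end SegNorm

theorem eq_zero_of_periodic_of_segNorm_le {N τ ω : ℕ} {u : ℤ → Fin N → ℝ} (hω : 0 < ω)
    (hu : Periodic u ω) {μ C : ℝ} (hμ : 0 < μ)
    (hdecay : ∀ n m, n ≤ m → segNorm τ u m ≤ C * exp (-μ * ((m : ℝ) - n)) * segNorm τ u n) :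
    u = 0 := by
  funext m
  have hr : exp (-μ * ω) < 1 := exp_lt_one_iff.2 (by nlinarith [(Nat.cast_pos.2 hω : (0 : ℝ) < ω)])
  have hle : ∀ k : ℕ, segNorm τ u m ≤ C * segNorm τ u m * exp (-μ * ω) ^ k := fun k => by
    have hper : segNorm τ u (m - k * ω) = segNorm τ u m := by
      rw [← sub_add_cancel m (k * ω : ℤ), ← segNorm_comp_add, (hu.nat_mul k).funext, sub_add_cancel]
    have := hdecay (m - k * ω) m (by nlinarith)
    rwa [hper, show -μ * ((m : ℝ) - ((m - k * ω : ℤ) : ℝ)) = k * (-μ * ω) by push_cast; ring,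
      exp_nat_mul, mul_right_comm] at this
  have hlim : Tendsto (fun k : ℕ => C * segNorm τ u m * exp (-μ * ω) ^ k) atTop (𝓝 0) := by
    simpa using (tendsto_pow_atTop_nhds_zero_of_lt_one (exp_pos _).le hr).const_mul
      (C * segNorm τ u m)
  exact norm_le_zero_iff.1 ((norm_le_segNorm τ u (by omega) le_rfl).trans (ge_of_tendsto' hlim hle))

theorem discrete_halanay {u : ℤ → ℝ} {τ : ℕ} {n : ℤ} {μ K : ℝ} (hμ : 0 ≤ μ) (hK : 0 ≤ K)
    (hbase : ∀ k, n - τ ≤ k → k ≤ n → u k ≤ K)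
    (hstep : ∀ m, n ≤ m → ∀ c, (∀ k, m - τ ≤ k → k ≤ m → u k ≤ c) →
      u (m + 1) ≤ exp (-μ * (τ + 1)) * c) :
    ∀ m, n - τ ≤ m → u m ≤ K * exp (-μ * (m - n)) := by
  suffices h : ∀ d : ℕ, ∀ m, n - τ ≤ m → m ≤ n + d → u m ≤ K * exp (-μ * (m - n)) from
    fun m hm => h (m - n).toNat m hm (by omega)
  intro d
  induction d with
  | zero =>
    intro m h₁ h₂
    have hmn : (m : ℝ) ≤ n := by exact_mod_cast (show m ≤ n by omega)
    exact (hbase m h₁ (by omega)).trans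
      (le_mul_of_one_le_right hK (one_le_exp (by nlinarith)))
  | succ d ih =>
    intro m h₁ h₂
    rcases le_or_gt m (n + d) with hm | hm
    · exact ih m h₁ hm
    have hwin : ∀ k, m - 1 - τ ≤ k → k ≤ m - 1 → u k ≤ K * exp (-μ * ((m - 1 - τ : ℤ) - n)) := by
      intro k hk₁ hk₂
      refine (ih k (by omega) (by omega)).trans (mul_le_mul_of_nonneg_left ?_ hK)
      have : ((m - 1 - τ : ℤ) : ℝ) ≤ k := by exact_mod_cast hk₁
      exact exp_le_exp.2 (by nlinarith)
    have := hstep (m - 1) (by omega) _ hwin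
    rw [sub_add_cancel] at this
    refine this.trans (le_of_eq ?_)
    rw [mul_left_comm, ← exp_add]
    push_cast
    ring_nf

theorem exists_tendsto_add_mul_of_dist_le {E : Type*} [PseudoMetricSpace E] [CompleteSpace E]
    {g : ℤ → E} {ω : ℕ} (hω : 0 < ω) {K r : ℝ} (hr : r < 1)
    (hg : ∀ m, 0 ≤ m → ∀ k : ℕ, dist (g (m + k * ω)) (g (m + (k + 1) * ω)) ≤ K * r ^ k)
    (m : ℤ) : ∃ L, Tendsto (fun k : ℕ => g (m + k * ω)) atTop (𝓝 L) := by
  have hm₀ : 0 ≤ m + m.natAbs * ω := by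
    have : (1 : ℤ) ≤ ω := by exact_mod_cast hω
    nlinarith [Int.natCast_natAbs m, le_abs_self m, neg_abs_le m]
  obtain ⟨L, hL⟩ := cauchySeq_tendsto_of_complete (cauchySeq_of_le_geometric
    (f := fun k : ℕ => g (m + m.natAbs * ω + k * ω)) r K hr fun k => by
      simpa only [Nat.cast_succ] using hg _ hm₀ k)
  refine ⟨L, (tendsto_add_atTop_iff_nat m.natAbs).1 (hL.congr fun k => ?_)⟩
  push_cast
  ring_nf

theorem one_sub_exp_neg_mul_div_nonneg {a h : ℝ} (ha : 0 < a) (hh : 0 ≤ h) :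
    0 ≤ (1 - exp (-a * h)) / a :=
  div_nonneg (sub_nonneg.2 (exp_le_one_iff.2 (by nlinarith))) ha.le

theorem exp_neg_mul_add_div_mul_le {a a₀ h s x : ℝ} (ha₀ : 0 < a₀) (ha : a₀ ≤ a) (hh : 0 ≤ h)
    (hs : 0 ≤ s) (hsx : s ≤ a₀ * x) :
    exp (-a * h) * x + (1 - exp (-a * h)) / a * s ≤ x - (1 - exp (-a₀ * h)) * (x - s / a₀) := by
  have hE : exp (-a * h) ≤ exp (-a₀ * h) := exp_le_exp.2 (by nlinarith)
  have hE₁ : exp (-a * h) ≤ 1 := exp_le_one_iff.2 (by nlinarith)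
  have hθ : (1 - exp (-a * h)) / a * s ≤ (1 - exp (-a * h)) * (s / a₀) := by
    rw [div_mul_eq_mul_div, mul_div_assoc]
    gcongr
  have hx : s / a₀ ≤ x := by rwa [div_le_iff₀' ha₀]
  nlinarith

theorem exists_exp_rate {N : ℕ} (a : ℤ → Fin N → ℝ) {h : ℝ} (hh : 0 < h) (τ : ℕ)
    {aminus : Fin N → ℝ} (halb : ∀ m i, aminus i ≤ a m i) {G : Fin N → Fin N → ℝ}
    (hG : ∀ i j, 0 ≤ G i j) {ξ : Fin N → ℝ} (hξ : ∀ i, 0 < ξ i)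
    (hGξ : ∀ i, ∑ j, G i j * ξ j < aminus i * ξ i) :
    ∃ μ > 0, ∀ m i, exp (-(a m i) * h) * ξ i + (1 - exp (-(a m i) * h)) / a m i *
      ∑ j, G i j * ξ j ≤ exp (-μ * (τ + 1)) * ξ i := by
  have hGξ₀ : ∀ i, 0 ≤ ∑ j, G i j * ξ j := fun i =>
    Finset.sum_nonneg fun j _ => mul_nonneg (hG i j) (hξ j).le
  have ha₀ : ∀ i, 0 < aminus i := fun i =>
    pos_of_mul_pos_left ((hGξ₀ i).trans_lt (hGξ i)) (hξ i).le
  -- `r i` bounds the left-hand side uniformly in `m`, by `exp_neg_mul_add_div_mul_le`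
  set r : Fin N → ℝ := fun i =>
    ξ i - (1 - exp (-aminus i * h)) * (ξ i - (∑ j, G i j * ξ j) / aminus i)
  have hr : ∀ i, r i < ξ i := by
    intro i
    have h₁ : 0 < 1 - exp (-aminus i * h) := sub_pos.2 (exp_lt_one_iff.2 (by nlinarith [ha₀ i]))
    have h₂ : (∑ j, G i j * ξ j) / aminus i < ξ i := by rw [div_lt_iff₀' (ha₀ i)]; exact hGξ i
    nlinarith
  have hev : ∀ᶠ μ in 𝓝[>] 0, ∀ i, r i < exp (-μ * (τ + 1)) * ξ i := by
    refine eventually_all.2 fun i => nhdsWithin_le_nhds ?_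
    have : Tendsto (fun μ : ℝ => exp (-μ * (τ + 1)) * ξ i) (𝓝 0) (𝓝 (ξ i)) := by
      simpa using ((by fun_prop : Continuous fun μ : ℝ => exp (-μ * (τ + 1)) * ξ i).tendsto 0)
    exact this.eventually (lt_mem_nhds (hr i))
  obtain ⟨μ, hμr, hμ⟩ := (hev.and self_mem_nhdsWithin).exists
  exact ⟨μ, hμ, fun m i => (exp_neg_mul_add_div_mul_le (ha₀ i) (halb m i) hh.le (hGξ₀ i)
    (hGξ i).le).trans (hμr i).le⟩

namespace Hopfield

variable {N : ℕ} {h : ℝ} {a : ℤ → Fin N → ℝ} {b : ℤ → Fin N → Fin N → ℝ} {I : ℤ → Fin N → ℝ}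
  {τd : ℤ → ℕ} {f : Fin N → ℝ → ℝ}

variable (h a b I f) in
/-- `x` is the state at time `m`, `xd` the delayed state at time `m - τd m`. -/
noncomputable def step (m : ℤ) (x xd : Fin N → ℝ) : Fin N → ℝ := fun i =>
  x i * exp (-(a m i) * h) +
    ((1 - exp (-(a m i) * h)) / a m i) * ((∑ j, b m i j * f j (xd j)) + I m i)

variable (h a b I τd f) in
def IsSolutionFrom (n : ℤ) (x : ℤ → Fin N → ℝ) : Prop :=
  ∀ m, n ≤ m → ∀ i, x (m + 1) i = step h a b I f m (x m) (x (m - τd m)) i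

variable (h a b I τd f) in
def ExpStable (τ : ℕ) (μ C : ℝ) : Prop :=
  ∀ n x y, IsSolutionFrom h a b I τd f n x → IsSolutionFrom h a b I τd f n y → ∀ m, n ≤ m →
    segNorm τ (fun k i => y k i - x k i) m ≤
      C * exp (-μ * ((m : ℝ) - n)) * segNorm τ (fun k i => y k i - x k i) n

theorem IsSolutionFrom.mono {n n' : ℤ} (hnn' : n ≤ n') {x : ℤ → Fin N → ℝ}
    (hx : IsSolutionFrom h a b I τd f n x) : IsSolutionFrom h a b I τd f n' x :=
  fun m hm => hx m (hnn'.trans hm)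

theorem abs_step_sub_step_le (hh : 0 ≤ h) {m : ℤ} {i : Fin N} (ha : 0 < a m i)
    {G : Fin N → Fin N → ℝ} (hbf : ∀ j u v, |b m i j * (f j u - f j v)| ≤ G i j * |u - v|)
    (x x' xd xd' : Fin N → ℝ) :
    |step h a b I f m x xd i - step h a b I f m x' xd' i| ≤
      exp (-(a m i) * h) * |x i - x' i| +
        (1 - exp (-(a m i) * h)) / a m i * ∑ j, G i j * |xd j - xd' j| := by
  have hθ := one_sub_exp_neg_mul_div_nonneg ha hh
  have hdiff : step h a b I f m x xd i - step h a b I f m x' xd' i =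
      exp (-(a m i) * h) * (x i - x' i) +
        (1 - exp (-(a m i) * h)) / a m i * ∑ j, b m i j * (f j (xd j) - f j (xd' j)) := by
    simp only [step, mul_sub, Finset.sum_sub_distrib]
    ring
  rw [hdiff]
  refine (abs_add_le _ _).trans (add_le_add ?_ ?_)
  · rw [abs_mul, abs_of_pos (exp_pos _)]
  rw [abs_mul, abs_of_nonneg hθ]
  exact mul_le_mul_of_nonneg_left
    ((Finset.abs_sum_le_sum_abs _ _).trans (Finset.sum_le_sum fun j _ => hbf j _ _)) hθ

theorem norm_div_sub_succ_le (hh : 0 ≤ h) (ha : ∀ m i, 0 < a m i) {τ : ℕ} (hτd : ∀ m, τd m ≤ τ)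
    {G : Fin N → Fin N → ℝ} (hG : ∀ i j, 0 ≤ G i j)
    (hbf : ∀ m i j u v, |b m i j * (f j u - f j v)| ≤ G i j * |u - v|)
    {ξ : Fin N → ℝ} (hξ : ∀ i, 0 < ξ i) {μ : ℝ}
    (hrate : ∀ m i, exp (-(a m i) * h) * ξ i + (1 - exp (-(a m i) * h)) / a m i *
      ∑ j, G i j * ξ j ≤ exp (-μ * (τ + 1)) * ξ i)
    {n : ℤ} {x y : ℤ → Fin N → ℝ} (hx : IsSolutionFrom h a b I τd f n x)
    (hy : IsSolutionFrom h a b I τd f n y) {m : ℤ} (hm : n ≤ m) {c : ℝ}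
    (hc : ∀ k, m - τ ≤ k → k ≤ m → ‖(y k - x k) / ξ‖ ≤ c) :
    ‖(y (m + 1) - x (m + 1)) / ξ‖ ≤ exp (-μ * (τ + 1)) * c := by
  have hcur := abs_le_mul_of_norm_div_le hξ (hc m (by omega) le_rfl)
  have hdel := abs_le_mul_of_norm_div_le hξ (hc (m - τd m) (by have := hτd m; omega) (by omega))
  have hc₀ : 0 ≤ c := (norm_nonneg _).trans (hc m (by omega) le_rfl)
  refine norm_div_le_of_abs_le hξ (by positivity) fun i => ?_
  have hθ := one_sub_exp_neg_mul_div_nonneg (ha m i) hh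
  simp only [Pi.sub_apply] at hcur hdel ⊢
  rw [hy m hm i, hx m hm i]
  calc _ ≤ exp (-(a m i) * h) * |y m i - x m i| + (1 - exp (-(a m i) * h)) / a m i *
        ∑ j, G i j * |y (m - τd m) j - x (m - τd m) j| :=
        abs_step_sub_step_le hh (ha m i) (hbf m i) _ _ _ _
    _ ≤ exp (-(a m i) * h) * (c * ξ i) + (1 - exp (-(a m i) * h)) / a m i *
        ∑ j, G i j * (c * ξ j) :=
      add_le_add (mul_le_mul_of_nonneg_left (hcur i) (exp_pos _).le) (mul_le_mul_of_nonneg_left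
        (Finset.sum_le_sum fun j _ => mul_le_mul_of_nonneg_left (hdel j) (hG i j)) hθ)
    _ = (exp (-(a m i) * h) * ξ i + (1 - exp (-(a m i) * h)) / a m i * ∑ j, G i j * ξ j) * c := by
      simp only [mul_left_comm _ c, ← Finset.mul_sum]
      ring
    _ ≤ exp (-μ * (τ + 1)) * ξ i * c := by gcongr; exact hrate m i
    _ = exp (-μ * (τ + 1)) * c * ξ i := by ring

theorem exists_expStable (hh : 0 < h) (ha : ∀ m i, 0 < a m i) {τ : ℕ} (hτd : ∀ m, τd m ≤ τ)
    {aminus : Fin N → ℝ} (halb : ∀ m i, aminus i ≤ a m i)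
    {G : Fin N → Fin N → ℝ} (hG : ∀ i j, 0 ≤ G i j)
    (hbf : ∀ m i j u v, |b m i j * (f j u - f j v)| ≤ G i j * |u - v|)
    {ξ : Fin N → ℝ} (hξ : ∀ i, 0 < ξ i) (hGξ : ∀ i, ∑ j, G i j * ξ j < aminus i * ξ i) :
    ∃ μ > (0 : ℝ), ∃ C > (1 : ℝ), ExpStable h a b I τd f τ μ C := by
  obtain ⟨μ, hμ, hrate⟩ := exists_exp_rate a hh τ halb hG hξ hGξ
  set A := ∑ i, ξ i
  set B := ∑ i, (ξ i)⁻¹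
  have hA : 0 ≤ A := Finset.sum_nonneg fun i _ => (hξ i).le
  have hB : 0 ≤ B := Finset.sum_nonneg fun i _ => (inv_pos.2 (hξ i)).le
  -- `A` and `B` compare the sup norm with the `ξ`-weighted one; `exp (μ τ)` pays for the window
  refine ⟨μ, hμ, max (A * B * exp (μ * τ)) 2, by simp, fun n x y hx hy m hm => ?_⟩
  set e : ℤ → Fin N → ℝ := fun k i => y k i - x k i
  set S := segNorm τ e n
  have hS : 0 ≤ S := segNorm_nonneg τ e n
  have hdecay := discrete_halanay (u := fun k => ‖e k / ξ‖) hμ.le (mul_nonneg hB hS)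
    (fun k h₁ h₂ => (norm_div_le_sum_inv_mul_norm hξ _).trans
      (mul_le_mul_of_nonneg_left (norm_le_segNorm τ e h₁ h₂) hB))
    (fun m hm c hc => norm_div_sub_succ_le hh.le ha hτd hG hbf hξ hrate hx hy hm hc)
  calc segNorm τ e m ≤ A * (B * S * exp (-μ * (((m - τ : ℤ) : ℝ) - n))) := by
        refine segNorm_le fun k h₁ h₂ => (norm_le_sum_mul_norm_div hξ _).trans
          (mul_le_mul_of_nonneg_left ((hdecay k (by omega)).trans ?_) hA)
        have : ((m - τ : ℤ) : ℝ) ≤ k := by exact_mod_cast h₁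
        exact mul_le_mul_of_nonneg_left (exp_le_exp.2 (by nlinarith)) (mul_nonneg hB hS)
    _ = A * B * exp (μ * τ) * exp (-μ * ((m : ℝ) - n)) * S := by
        rw [show -μ * (((m - τ : ℤ) : ℝ) - n) = μ * τ + -μ * ((m : ℝ) - n) by push_cast; ring,
          exp_add]
        ring
    _ ≤ max (A * B * exp (μ * τ)) 2 * exp (-μ * ((m : ℝ) - n)) * S := by
        gcongr
        exact le_max_left _ _

variable (h a b I τd f) in
noncomputable def forwardSolution (n m : ℤ) : Fin N → ℝ :=
  if m ≤ n then 0
  else step h a b I f (m - 1) (forwardSolution n (m - 1)) (forwardSolution n (m - 1 - τd (m - 1)))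
termination_by (m - n).toNat
decreasing_by all_goals omega

variable (h a b I τd f) in
theorem exists_isSolutionFrom (n : ℤ) : ∃ x, IsSolutionFrom h a b I τd f n x := by
  refine ⟨forwardSolution h a b I τd f n, fun m hm i => ?_⟩
  rw [forwardSolution, if_neg (by omega), add_sub_cancel_right]

theorem step_periodic {ω : ℤ} (ha : Periodic a ω) (hb : Periodic b ω) (hI : Periodic I ω) :
    Periodic (step h a b I f) ω := by
  intro m
  ext x xd i
  simp only [step, ha m, hb m, hI m]

theorem IsSolutionFrom.comp_add {c : ℤ} (hstep : Periodic (step h a b I f) c)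
    (hτd : Periodic τd c) {n : ℤ} {x : ℤ → Fin N → ℝ} (hx : IsSolutionFrom h a b I τd f n x) :
    IsSolutionFrom h a b I τd f (n - c) fun m => x (m + c) := by
  intro m hm i
  have := hx (m + c) (by omega) i
  rwa [hstep m, hτd m, show m + c + 1 = m + 1 + c by ring,
    show m + c - τd m = m - τd m + c by ring] at this

variable (h a b I) in
theorem continuous_step (hf : ∀ j, Continuous (f j)) (m : ℤ) :
    Continuous fun p : (Fin N → ℝ) × (Fin N → ℝ) => step h a b I f m p.1 p.2 :=
  continuous_pi fun i => by simp only [step]; fun_prop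

theorem isSolutionFrom_of_tendsto (hf : ∀ j, Continuous (f j)) {xs : ℕ → ℤ → Fin N → ℝ}
    {ns : ℕ → ℤ} (hsol : ∀ k, IsSolutionFrom h a b I τd f (ns k) (xs k))
    (hns : Tendsto ns atTop atBot) {x : ℤ → Fin N → ℝ}
    (hx : ∀ m, Tendsto (fun k => xs k m) atTop (𝓝 (x m))) (n : ℤ) :
    IsSolutionFrom h a b I τd f n x := by
  intro m _ i
  have hstep : ∀ᶠ k in atTop, step h a b I f m (xs k m) (xs k (m - τd m)) = xs k (m + 1) :=
    (hns.eventually (eventually_le_atBot m)).mono fun k hk => (funext (hsol k m hk)).symm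
  have hlim := ((continuous_step h a b I hf m).tendsto (x m, x (m - τd m))).comp
    ((hx m).prodMk_nhds (hx (m - τd m)))
  exact congrFun (tendsto_nhds_unique (hx (m + 1)) (hlim.congr' hstep)) i

theorem dist_translate_le {x₀ : ℤ → Fin N → ℝ} {ω τ : ℕ} {μ C : ℝ} (hμ : 0 ≤ μ) (hC : 0 ≤ C)
    (hsol : ∀ k : ℕ, IsSolutionFrom h a b I τd f (-(k * ω)) fun m => x₀ (m + k * ω))
    (hstab : ExpStable h a b I τd f τ μ C)
    {m : ℤ} (hm : 0 ≤ m) (k : ℕ) :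
    dist (x₀ (m + k * ω)) (x₀ (m + (k + 1) * ω)) ≤
      C * segNorm τ (fun j i => x₀ (j + ω) i - x₀ j i) 0 * exp (-μ * ω) ^ k := by
  set u : ℤ → Fin N → ℝ := fun j i => x₀ (j + ω) i - x₀ j i
  have hkω : (0 : ℤ) ≤ k * ω := by positivity
  have hsol' : IsSolutionFrom h a b I τd f (-(k * ω)) fun m => x₀ (m + (k + 1) * ω) := by
    simpa using (hsol (k + 1)).mono (by push_cast; nlinarith)
  have hshift : (fun j i => x₀ (j + (k + 1) * ω) i - x₀ (j + k * ω) i) =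
      fun j => u (j + k * ω) := by
    funext j i
    simp only [u]
    ring_nf
  have hdecay := hstab _ _ _ (hsol k) hsol' m (by omega)
  rw [hshift, segNorm_comp_add τ u _ (-(k * ω)), neg_add_cancel] at hdecay
  calc dist (x₀ (m + k * ω)) (x₀ (m + (k + 1) * ω)) = ‖u (m + k * ω)‖ := by
        rw [dist_comm, dist_eq_norm]
        congr 1
        funext i
        simp only [u, Pi.sub_apply]
        ring_nf
    _ ≤ segNorm τ (fun j => u (j + k * ω)) m :=
        norm_le_segNorm τ (fun j => u (j + k * ω)) (k := m) (by omega) le_rfl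
    _ ≤ C * exp (-μ * ((m : ℝ) - ((-(k * ω) : ℤ) : ℝ))) * segNorm τ u 0 := hdecay
    _ ≤ C * segNorm τ u 0 * exp (-μ * ω) ^ k := by
        rw [← exp_nat_mul, mul_right_comm]
        have : (0 : ℝ) ≤ m := by exact_mod_cast hm
        exact mul_le_mul_of_nonneg_left (exp_le_exp.2 (by push_cast; nlinarith))
          (mul_nonneg hC (segNorm_nonneg τ u 0))

theorem exists_periodic_isSolutionFrom (hf : ∀ j, Continuous (f j)) {ω : ℕ} (hω : 0 < ω)
    (hstepP : Periodic (step h a b I f) ω) (hτd : Periodic τd ω) {τ : ℕ} {μ C : ℝ} (hμ : 0 < μ)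
    (hC : 0 ≤ C)
    (hstab : ExpStable h a b I τd f τ μ C) :
    ∃ xp, (∀ n, IsSolutionFrom h a b I τd f n xp) ∧ Periodic xp ω := by
  obtain ⟨x₀, hx₀⟩ := exists_isSolutionFrom h a b I τd f 0
  have hsol : ∀ k : ℕ, IsSolutionFrom h a b I τd f (-(k * ω)) fun m => x₀ (m + k * ω) :=
    fun k => by
      simpa only [zero_sub] using hx₀.comp_add (hstepP.nat_mul k) (hτd.nat_mul k)
  have hr : exp (-μ * ω) < 1 := exp_lt_one_iff.2 (by nlinarith [(Nat.cast_pos.2 hω : (0 : ℝ) < ω)])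
  choose xp hxp using exists_tendsto_add_mul_of_dist_le (g := x₀) hω hr fun m hm k =>
    dist_translate_le hμ.le hC hsol hstab hm k
  have hns : Tendsto (fun k : ℕ => -((k : ℤ) * ω)) atTop atBot :=
    tendsto_atBot_mono (fun k => neg_le_neg (le_mul_of_one_le_right (by positivity)
      (by exact_mod_cast hω))) (tendsto_neg_atTop_atBot.comp tendsto_natCast_atTop_atTop)
  refine ⟨xp, isSolutionFrom_of_tendsto hf hsol hns hxp, fun m => ?_⟩
  refine tendsto_nhds_unique (hxp (m + ω)) ((tendsto_add_atTop_iff_nat 1).2 (hxp m) |>.congr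
    fun k => ?_)
  push_cast
  ring_nf

end Hopfield

/-- If the coefficients of the discretized Hopfield model are ω-periodic and
`M = diag(a_1^-,…,a_N^-) − [b_{ij}^+ F_j]` is an M-matrix, then the model has a unique
ω-periodic solution, which is globally exponentially stable. -/
theorem stmt6 {N τ : ℕ} (ω : ℕ) (hω : 0 < ω) (h : ℝ) (hh : 0 < h)
    (a : ℤ → Fin N → ℝ) (b : ℤ → Fin N → Fin N → ℝ) (I : ℤ → Fin N → ℝ)
    (τd : ℤ → ℕ) (hτd : ∀ m, τd m ≤ τ)
    (hpera : ∀ m i, a (m + ω) i = a m i)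
    (hperb : ∀ m i j, b (m + ω) i j = b m i j)
    (hperI : ∀ m i, I (m + ω) i = I m i)
    (hperτ : ∀ m, τd (m + ω) = τd m)
    (f : Fin N → ℝ → ℝ) (F : Fin N → ℝ) (hF : ∀ j, 0 < F j)
    (hfLip : ∀ j u v, |f j u - f j v| ≤ F j * |u - v|)
    (ha_pos : ∀ m i, 0 < a m i)
    (aminus : Fin N → ℝ) (bplus : Fin N → Fin N → ℝ)
    (ha_inf : ∀ i, IsGLB (Set.range fun m => a m i) (aminus i))
    (hb_sup : ∀ i j, IsLUB (Set.range fun m => |b m i j|) (bplus i j))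
    (hM : IsMMatrix (Matrix.diagonal aminus - Matrix.of fun i j => bplus i j * F j)) :
    ∃ xp : ℤ → Fin N → ℝ,
      -- xp is a solution
      (∀ m : ℤ, ∀ i,
        xp (m + 1) i = xp m i * Real.exp (-(a m i) * h) +
          ((1 - Real.exp (-(a m i) * h)) / a m i) *
            ((∑ j, b m i j * f j (xp (m - τd m) j)) + I m i)) ∧
      -- xp is ω-periodic
      (∀ m : ℤ, ∀ i, xp (m + ω) i = xp m i) ∧
      -- xp is the unique ω-periodic solution
      (∀ xq : ℤ → Fin N → ℝ,
        (∀ m : ℤ, ∀ i,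
          xq (m + 1) i = xq m i * Real.exp (-(a m i) * h) +
            ((1 - Real.exp (-(a m i) * h)) / a m i) *
              ((∑ j, b m i j * f j (xq (m - τd m) j)) + I m i)) →
        (∀ m : ℤ, ∀ i, xq (m + ω) i = xq m i) → xq = xp) ∧
      -- xp is globally exponentially stable
      (∃ μ > (0 : ℝ), ∃ C > (1 : ℝ), ∀ n : ℤ, 0 ≤ n → ∀ y : ℤ → Fin N → ℝ,
        (∀ m, n ≤ m → ∀ i,
          y (m + 1) i = y m i * Real.exp (-(a m i) * h) +
            ((1 - Real.exp (-(a m i) * h)) / a m i) *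
              ((∑ j, b m i j * f j (y (m - τd m) j)) + I m i)) →
        ∀ m, n ≤ m →
          segNorm τ (fun k i => y k i - xp k i) m ≤
            C * Real.exp (-μ * ((m : ℝ) - n)) *
              segNorm τ (fun k i => y k i - xp k i) n) := by
  have hbplus : ∀ i j, 0 ≤ bplus i j := fun i j => (abs_nonneg _).trans ((hb_sup i j).1 ⟨0, rfl⟩)
  have hbf : ∀ m i j u v, |b m i j * (f j u - f j v)| ≤ bplus i j * F j * |u - v| :=
    fun m i j u v => by
      rw [abs_mul, mul_assoc]
      exact mul_le_mul ((hb_sup i j).1 ⟨m, rfl⟩) (hfLip j u v) (abs_nonneg _) (hbplus i j)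
  obtain ⟨ξ, hξ, hMξ⟩ := hM.exists_pos_mulVec_pos
  have hGξ : ∀ i, ∑ j, bplus i j * F j * ξ j < aminus i * ξ i := fun i => by
    have := hMξ i
    rw [sub_mulVec, Pi.sub_apply, mulVec_diagonal] at this
    simpa [mulVec, dotProduct] using this
  obtain ⟨μ, hμ, C, hC, hstab⟩ := Hopfield.exists_expStable (I := I) hh ha_pos hτd
    (fun m i => (ha_inf i).1 ⟨m, rfl⟩) (fun i j => mul_nonneg (hbplus i j) (hF j).le) hbf hξ hGξ
  have hf : ∀ j, Continuous (f j) := fun j =>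
    (LipschitzWith.of_dist_le' fun u v => by simpa only [Real.dist_eq] using hfLip j u v).continuous
  have hstepP := Hopfield.step_periodic (h := h) (f := f) (fun m => funext (hpera m))
    (fun m => funext fun i => funext (hperb m i)) (fun m => funext (hperI m))
  obtain ⟨xp, hsol, hper⟩ :=
    Hopfield.exists_periodic_isSolutionFrom hf hω hstepP hperτ hμ (by linarith) hstab
  refine ⟨xp, fun m => hsol m m le_rfl, fun m i => by rw [hper m], fun xq hq hqper => ?_,
    μ, hμ, C, hC, fun n _ y hy => hstab n xp y (hsol n) hy⟩
  have hzero := eq_zero_of_periodic_of_segNorm_le (u := fun k i => xq k i - xp k i) hω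
    (fun m => funext fun i => by simp only [hqper, hper m]) hμ
    fun n m hnm => hstab n xp xq (hsol n) (fun m _ => hq m) m hnm
  funext m i
  exact sub_eq_zero.1 (congrFun (congrFun hzero m) i)
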